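/- arXiv:2105.14643 — 4 statements merged into one kernel-verified Lean document; each statement's English description precedes it below -/
import Mathlib

section
/- Let F ⊂ R^n (n ≥ 2) be compact convex with 0 ∈ int F, ξ ∈ ∂F, and suppose there exist δ > 0 and f : R^n → R of class C² on ξ + δB with F ⊆ {x : f(x) ≤ 0}, ⟨ξ, ∇f(ξ)⟩ > 0, and for x ∈ ξ + δB, x ∈ ∂F iff f(x) = 0. Then for any η ∈ ∂F ∩ (ξ + δ'B) (δ' small enough that ⟨y, ∇f(y)⟩ > 0 on ξ + δ'B), the normal cone N_F(η) equals the ray {λ∇f(η) : λ ≥ 0}. -/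
open RealInnerProductSpace Filter Metric Topology

noncomputable section

abbrev Euc (n : ℕ) := EuclideanSpace ℝ (Fin n)

/-- The polar set `F°`. -/
def polarSet {n : ℕ} (F : Set (Euc n)) : Set (Euc n) := {y | ∀ x ∈ F, ⟪x, y⟫ ≤ 1}

/-- The normal cone of convex analysis to `F` at `ξ`. -/
def normalCone {n : ℕ} (F : Set (Euc n)) (ξ : Euc n) : Set (Euc n) :=
  {ζ | ∀ y ∈ F, ⟪y - ξ, ζ⟫ ≤ 0}

/-- The tangent hyperplane to `F` at `ξ`. -/
def tangentHyp {n : ℕ} (F : Set (Euc n)) (ξ : Euc n) : Set (Euc n) :=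
  {v | ∀ ζ ∈ normalCone F ξ, ⟪v, ζ⟫ = 0}

/-- The 2-dimensional plane `P(η, u) = span{∇f(η), u} + η`. -/
def planeP {n : ℕ} (f : Euc n → ℝ) (η u : Euc n) : Set (Euc n) :=
  {y | ∃ a b : ℝ, y = η + a • gradient f η + b • u}

/-- `η* = ∇f(η)/⟨η, ∇f(η)⟩`, the unique element of `N_F(η) ∩ ∂F°`. -/
def etaStar {n : ℕ} (f : Euc n → ℝ) (η : Euc n) : Euc n :=
  (⟪η, gradient f η⟫)⁻¹ • gradient f η

/-- The 2-dimensional modulus of strict convexity `Ĉ_F(r, η, u)`. -/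
def Chat {n : ℕ} (F : Set (Euc n)) (f : Euc n → ℝ) (r : ℝ) (η u : Euc n) : ℝ :=
  sInf {t | ∃ y, y ∈ F ∧ y ∈ planeP f η u ∧ r ≤ ‖η - y‖ ∧ t = ⟪η - y, etaStar f η⟫}

/-- The tangent vector at `η` corresponding to a tangent vector `u` at `ξ`: the
coordinates `j ≠ i` agree with those of `u` and the `i`-th coordinate is determined
by tangency at `η`.  For `u = e_j` this is the tangent basis vector `u^j(η)`. -/
def uAt {n : ℕ} (f : Euc n → ℝ) (i : Fin n) (u : Euc n) (η : Euc n) : Euc n :=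
  ∑ j ∈ Finset.univ.erase i,
    u j • (EuclideanSpace.single j (1:ℝ) -
      (gradient f η j / gradient f η i) • EuclideanSpace.single i (1:ℝ))

/-- The directional lower curvature `γ̂_F(ξ, u(ξ))`, a liminf of the directional modulus
of strict convexity over `r²` as `(r, η) → (0⁺, ξ)`, `η ∈ ∂F`. -/
def gammaDir {n : ℕ} (F : Set (Euc n)) (f : Euc n → ℝ) (i : Fin n) (ξ u : Euc n) : ℝ :=
  Filter.liminf (fun p : ℝ × Euc n => Chat F f p.1 p.2 (uAt f i u p.2) / p.1 ^ 2)
    ((𝓝[>] (0:ℝ)) ×ˢ (𝓝 ξ ⊓ 𝓟 (frontier F)))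

/-- The Hessian bilinear form `⟨∇²f(ξ)u, v⟩`. -/
def hessQ {n : ℕ} (f : Euc n → ℝ) (ξ u v : Euc n) : ℝ := ⟪fderiv ℝ (gradient f) ξ u, v⟫

/-! The gradient `∇f(η)` is an outer normal by the first-order condition for the maximum `f(η) = 0`
of `f` on the convex set `F`. Conversely, a normal `ζ` makes `η` a maximum of `⟪·, ζ⟫` on `F`,
hence on the level set `{f = 0}`, which near `η` lies in `∂F ⊆ F`; Lagrange multipliers then make
`ζ` a multiple of `∇f(η) ≠ 0`, and testing `ζ` against `0 ∈ F` fixes the sign. -/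

open InnerProductSpace (toDual toDual_symm_apply)

section InnerProductSpace

variable {E : Type*} [NormedAddCommGroup E] [InnerProductSpace ℝ E] [CompleteSpace E]

theorem inner_sub_gradient_nonpos_of_isMaxOn {f : E → ℝ} {s : Set E} {x y : E}
    (hs : Convex ℝ s) (hmax : IsMaxOn f s x) (hf : DifferentiableAt ℝ f x)
    (hx : x ∈ s) (hy : y ∈ s) : ⟪y - x, gradient f x⟫ ≤ 0 := by
  rw [real_inner_comm, gradient, toDual_symm_apply]
  exact hmax.localize.hasFDerivWithinAt_nonpos hf.hasFDerivAt.hasFDerivWithinAt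
    (sub_mem_posTangentConeAt_of_segment_subset (hs.segment_subset hx hy))

theorem exists_eq_smul_gradient_of_isLocalMaxOn_inner {f : E → ℝ} {x ζ : E}
    (hf : HasStrictFDerivAt f (fderiv ℝ f x) x) (hgrad : gradient f x ≠ 0)
    (hmax : IsLocalMaxOn (fun y => ⟪ζ, y⟫) {y | f y = f x} x) :
    ∃ c : ℝ, ζ = c • gradient f x := by
  obtain ⟨a, b, hab, hlagrange⟩ :=
    IsLocalExtrOn.exists_multipliers_of_hasStrictFDerivAt_1d (IsMaxFilter.isExtr hmax) hf
      (innerSL ℝ ζ).hasStrictFDerivAt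
  have hvec : a • gradient f x + b • ζ = 0 := by
    apply (toDual ℝ E).injective
    rw [map_add, map_smul, map_smul, gradient, LinearIsometryEquiv.apply_symm_apply, map_zero]
    exact hlagrange
  rcases eq_or_ne b 0 with rfl | hb
  · have ha : a ≠ 0 := by simpa using hab
    simp [ha, hgrad] at hvec
  · refine ⟨-(a / b), ?_⟩
    rw [← inv_smul_smul₀ hb ζ, eq_neg_of_add_eq_zero_right hvec, smul_neg, smul_smul, neg_smul,
      inv_mul_eq_div]

end InnerProductSpace

section NormalCone

variable {n : ℕ} {F : Set (Euc n)} {η ζ : Euc n}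

theorem mem_normalCone_iff_isMaxOn_inner :
    ζ ∈ normalCone F η ↔ IsMaxOn (fun y => ⟪ζ, y⟫) F η := by
  simp only [normalCone, isMaxOn_iff, Set.mem_ofPred_eq, inner_sub_left, sub_nonpos,
    real_inner_comm ζ]

theorem smul_mem_normalCone {l : ℝ} (hl : 0 ≤ l) (hζ : ζ ∈ normalCone F η) :
    l • ζ ∈ normalCone F η := fun y hy => by
  rw [real_inner_smul_right]
  exact mul_nonpos_of_nonneg_of_nonpos hl (hζ y hy)

theorem inner_nonneg_of_mem_normalCone (h0 : (0 : Euc n) ∈ F) (hζ : ζ ∈ normalCone F η) :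
    0 ≤ ⟪η, ζ⟫ := by
  simpa [inner_neg_left] using hζ 0 h0

end NormalCone

theorem normalCone_eq_ray_gradient_general
    {n : ℕ} (F : Set (Euc n)) (hF : IsCompact F) (hFc : Convex ℝ F)
    (h0 : (0 : Euc n) ∈ interior F) (ξ : Euc n)
    (f : Euc n → ℝ) (δ : ℝ) (hf : ContDiffOn ℝ 2 f (Metric.ball ξ δ))
    (hFf : F ⊆ {x | f x ≤ 0})
    (hbd : ∀ x ∈ Metric.ball ξ δ, (x ∈ frontier F ↔ f x = 0))
    (δ' : ℝ) (hδ'le : δ' ≤ δ)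
    (hδ' : ∀ y ∈ Metric.ball ξ δ', 0 < ⟪y, gradient f y⟫) :
    ∀ η ∈ frontier F ∩ Metric.ball ξ δ',
      normalCone F η = {ζ | ∃ l : ℝ, 0 ≤ l ∧ ζ = l • gradient f η} := by
  rintro η ⟨hηF, hηξ⟩
  have hball : Metric.ball ξ δ ∈ 𝓝 η := isOpen_ball.mem_nhds (ball_subset_ball hδ'le hηξ)
  have hfη : f η = 0 := (hbd η (mem_of_mem_nhds hball)).mp hηF
  have hstrict : HasStrictFDerivAt f (fderiv ℝ f η) η :=
    (hf.contDiffAt hball).hasStrictFDerivAt (by norm_num)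
  have hpos : 0 < ⟪η, gradient f η⟫ := hδ' η hηξ
  have hgrad : gradient f η ∈ normalCone F η := fun y hy =>
    inner_sub_gradient_nonpos_of_isMaxOn hFc (fun z hz => (hFf hz).trans hfη.ge)
      hstrict.differentiableAt (hF.isClosed.frontier_subset hηF) hy
  ext ζ
  constructor
  · intro hζ
    have hlevel : IsLocalMaxOn (fun y => ⟪ζ, y⟫) {y | f y = f η} η := by
      filter_upwards [self_mem_nhdsWithin, mem_nhdsWithin_of_mem_nhds hball] with y hy hyδ
      exact mem_normalCone_iff_isMaxOn_inner.mp hζ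
        (hF.isClosed.frontier_subset ((hbd y hyδ).mpr (hy.trans hfη)))
    obtain ⟨c, rfl⟩ := exists_eq_smul_gradient_of_isLocalMaxOn_inner hstrict
      (fun h => by simp [h] at hpos) hlevel
    have hsign := inner_nonneg_of_mem_normalCone (interior_subset h0) hζ
    rw [real_inner_smul_right] at hsign
    exact ⟨c, nonneg_of_mul_nonneg_left hsign hpos, rfl⟩
  · rintro ⟨l, hl, rfl⟩
    exact smul_mem_normalCone hl hgrad

/-- Under the standing C² hypotheses, for every boundary point `η` near `ξ` the normal
cone to `F` at `η` is the ray generated by `∇f(η)`. -/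
theorem normalCone_eq_ray_gradient
    {n : ℕ} (hn : 2 ≤ n) (F : Set (Euc n)) (hF : IsCompact F) (hFc : Convex ℝ F)
    (h0 : (0 : Euc n) ∈ interior F) (ξ : Euc n) (hξ : ξ ∈ frontier F)
    (f : Euc n → ℝ) (δ : ℝ) (hδ : 0 < δ) (hf : ContDiffOn ℝ 2 f (Metric.ball ξ δ))
    (hFf : F ⊆ {x | f x ≤ 0}) (hgr : 0 < ⟪ξ, gradient f ξ⟫)
    (hbd : ∀ x ∈ Metric.ball ξ δ, (x ∈ frontier F ↔ f x = 0))
    (δ' : ℝ) (hδ'pos : 0 < δ') (hδ'le : δ' ≤ δ)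
    (hδ' : ∀ y ∈ Metric.ball ξ δ', 0 < ⟪y, gradient f y⟫) :
    ∀ η ∈ frontier F ∩ Metric.ball ξ δ',
      normalCone F η = {ζ | ∃ l : ℝ, 0 ≤ l ∧ ζ = l • gradient f η} :=
  normalCone_eq_ray_gradient_general F hF hFc h0 ξ f δ hf hFf hbd δ' hδ'le hδ'
end
end

section
/- The directional modulus/curvature quantity (1/‖ξ*‖)·γ̂ is translation invariant in the following sense: for y₁, y₂ in the relative interior of F ∩ P(ξ, u), with ξ₁* the unique element of J_{F−y₁}^{−1}(ξ − y₁) and ξ₂* the unique element of J_{F−y₂}^{−1}(ξ − y₂), one has (1/‖ξ₁*‖)·γ̂_{F−y₁}(ξ − y₁, u^j(ξ)) = (1/‖ξ₂*‖)·γ̂_{F−y₂}(ξ − y₂, u^j(ξ)), and moreover ξ₂* = ξ₁*/(1 + ⟨y₁ − y₂, ξ₁*⟩) is collinear with ξ₁*. -/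
open RealInnerProductSpace Filter Metric Topology

noncomputable section

/-- The modulus of strict convexity of the translated body `F - y` at `η - y` in the
direction `u`, written in terms of points of `F` itself: the dual vector of `η - y`
for `F - y` is `∇f(η)/⟨η - y, ∇f(η)⟩`. -/
def ChatShift {n : ℕ} (F : Set (Euc n)) (f : Euc n → ℝ) (y : Euc n) (r : ℝ)
    (η u : Euc n) : ℝ :=
  sInf {t | ∃ z, z ∈ F ∧ z ∈ planeP f η u ∧ r ≤ ‖η - z‖ ∧
    t = ⟪η - z, (⟪η - y, gradient f η⟫)⁻¹ • gradient f η⟫}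

/-- The directional lower curvature of the translated body `F - y` at `ξ - y`. -/
def gammaShift {n : ℕ} (F : Set (Euc n)) (f : Euc n → ℝ) (y : Euc n) (i : Fin n)
    (ξ u : Euc n) : ℝ :=
  Filter.liminf (fun p : ℝ × Euc n => ChatShift F f y p.1 p.2 (uAt f i u p.2) / p.1 ^ 2)
    ((𝓝[>] (0:ℝ)) ×ˢ (𝓝 ξ ⊓ 𝓟 (frontier F)))

/-!
Write `a_y = ⟪ξ - y, ∇f ξ⟫`, so that `ξ_y* = a_y⁻¹ • ∇f ξ`. The modulus of `F - y` at `η - y` is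
`⟪η - y, ∇f η⟫⁻¹` times the modulus `ChatGrad` measured against `∇f η` itself, which does not
involve `y`. Since `ChatGrad ≥ 0` near `ξ` (the gradient is an outer normal of the convex body) and
the factor tends to `a_y⁻¹`, one gets `γ̂_{F-y} = a_y⁻¹ · liminf (ChatGrad / r²)`; dividing by
`‖ξ_y*‖ = a_y⁻¹ ‖∇f ξ‖` removes `y`. What needs an argument is `a_y > 0`: as `∂F` is `C¹` at `ξ`,
`F ∩ P` contains the points `ξ - t ∇f ξ` strictly below the tangent hyperplane, so a relative
interior point of `F ∩ P` cannot lie on that hyperplane. Collinearity is the identity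
`1 + ⟪y₁ - y₂, ξ₁*⟫ = a_{y₂} / a_{y₁}`.
-/

open scoped Pointwise

lemma liminf_mul_of_tendsto {α : Type*} {l : Filter α} [l.NeBot] {φ w : α → ℝ} {A : ℝ}
    (hφ : Tendsto φ l (𝓝 A)) (hA : 0 < A) (hw : 0 ≤ᶠ[l] w) :
    liminf (fun x => φ x * w x) l = A * liminf w l := by
  have hφ0 : 0 ≤ᶠ[l] φ := (hφ.eventually (lt_mem_nhds hA)).mono fun _ h => h.le
  have hφw : 0 ≤ᶠ[l] fun x => φ x * w x := (hφ0.and hw).mono fun _ h => mul_nonneg h.1 h.2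
  by_cases hc : IsCoboundedUnder (· ≥ ·) l w
  · apply le_antisymm
    · calc liminf (fun x => φ x * w x) l ≤ limsup φ l * liminf w l :=
            liminf_mul_le hφ0 hφ.isBoundedUnder_le hw hc
        _ = A * liminf w l := by rw [hφ.limsup_eq]
    · calc A * liminf w l = liminf φ l * liminf w l := by rw [hφ.liminf_eq]
        _ ≤ liminf (fun x => φ x * w x) l := le_liminf_mul hφ0 hφ.isBoundedUnder_le hw hc
  · -- both liminfs are the junk value `0`: `w = φ⁻¹ * (φ * w)` eventually, so `φ * w` is not
    -- cobounded either
    have hφinv : Tendsto φ⁻¹ l (𝓝 A⁻¹) := hφ.inv₀ hA.ne'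
    have hc' : ¬ IsCoboundedUnder (· ≥ ·) l fun x => φ x * w x := by
      intro h
      have hmul := isCoboundedUnder_ge_mul_of_nonneg
        ((hφinv.eventually (lt_mem_nhds (inv_pos.2 hA))).mono fun _ h => h.le)
        hφinv.isBoundedUnder_le hφw h
      have heq : (φ⁻¹ * fun x => φ x * w x) =ᶠ[l] w :=
        (hφ.eventually_ne hA.ne').mono fun x hx => by simp [hx]
      exact hc (by rwa [IsCoboundedUnder, ← map_congr heq])
    rw [Real.liminf_of_not_isCoboundedUnder hc, Real.liminf_of_not_isCoboundedUnder hc', mul_zero]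

section
variable {E : Type*} [NormedAddCommGroup E] [InnerProductSpace ℝ E]

lemma exists_add_smul_sub_mem_of_mem_intrinsicInterior {S : Set E} {y z : E}
    (hy : y ∈ intrinsicInterior ℝ S) (hz : z ∈ S) : ∃ s : ℝ, 0 < s ∧ y + s • (y - z) ∈ S := by
  obtain ⟨y', hy', rfl⟩ := mem_intrinsicInterior.1 hy
  have hzA : z ∈ affineSpan ℝ S := subset_affineSpan ℝ S hz
  let ψ : ℝ → affineSpan ℝ S := fun c =>
    ⟨c • ((y' : E) - z) + z, by simpa using (affineSpan ℝ S).smul_vsub_vadd_mem c y'.2 hzA hzA⟩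
  have hψ : Continuous ψ := by fun_prop
  have hψ1 : ψ 1 = y' := Subtype.ext (by simp [ψ])
  have hev : ∀ᶠ c in 𝓝 (1 : ℝ), ψ c ∈ interior (((↑) : affineSpan ℝ S → E) ⁻¹' S) :=
    hψ.continuousAt.preimage_mem_nhds (isOpen_interior.mem_nhds (hψ1 ▸ hy'))
  obtain ⟨c, hc, hc1⟩ :=
    ((hev.filter_mono nhdsWithin_le_nhds).and (self_mem_nhdsWithin (s := Set.Ioi 1))).exists
  refine ⟨c - 1, sub_pos.2 hc1, ?_⟩
  have hcS : (ψ c : E) ∈ S := interior_subset (s := ((↑) : affineSpan ℝ S → E) ⁻¹' S) hc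
  convert hcS using 1
  module

lemma inner_lt_of_mem_intrinsicInterior {S : Set E} {v : E} {c : ℝ} (hS : ∀ x ∈ S, ⟪x, v⟫ ≤ c)
    {z : E} (hz : z ∈ S) (hzc : ⟪z, v⟫ < c) {y : E} (hy : y ∈ intrinsicInterior ℝ S) :
    ⟪y, v⟫ < c := by
  obtain ⟨s, hs, hmem⟩ := exists_add_smul_sub_mem_of_mem_intrinsicInterior hy hz
  have h := hS _ hmem
  rw [inner_add_left, real_inner_smul_left, inner_sub_left] at h
  have hy := hS y (intrinsicInterior_subset hy)
  nlinarith

lemma exists_pos_mul_norm_lt_neg_inner_add {x y g : E} (hx : ⟪x, g⟫ < 0) (hy : ⟪y, g⟫ < 0) :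
    ∃ c : ℝ, 0 < c ∧ ∀ a b : ℝ, 0 ≤ a → 0 < b → c * ‖a • x + b • y‖ < -⟪a • x + b • y, g⟫ := by
  obtain ⟨c, ⟨hcx, hcy⟩, hc⟩ : ∃ c : ℝ, (c * ‖x‖ < -⟪x, g⟫ ∧ c * ‖y‖ < -⟪y, g⟫) ∧ 0 < c := by
    have h1 := ((continuous_mul_const ‖x‖).tendsto' 0 0 (zero_mul _)).eventually
      (gt_mem_nhds (neg_pos.2 hx))
    have h2 := ((continuous_mul_const ‖y‖).tendsto' 0 0 (zero_mul _)).eventually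
      (gt_mem_nhds (neg_pos.2 hy))
    exact (((h1.and h2).filter_mono nhdsWithin_le_nhds).and
      (self_mem_nhdsWithin (s := Set.Ioi 0))).exists
  refine ⟨c, hc, fun a b ha hb => ?_⟩
  have hnorm : ‖a • x + b • y‖ ≤ a * ‖x‖ + b * ‖y‖ := by
    refine (norm_add_le _ _).trans_eq ?_
    rw [norm_smul, norm_smul, Real.norm_of_nonneg ha, Real.norm_of_nonneg hb.le]
  rw [inner_add_left, real_inner_smul_left, real_inner_smul_left]
  nlinarith [mul_le_mul_of_nonneg_left hnorm hc.le, mul_le_mul_of_nonneg_left hcx.le ha,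
    mul_lt_mul_of_pos_left hcy hb]

lemma inv_gauge_smul_mem_frontier {F : Set E} (hFc : Convex ℝ F) (h0 : F ∈ 𝓝 0) {x : E}
    (hx : gauge F x ≠ 0) : (gauge F x)⁻¹ • x ∈ frontier F := by
  refine (gauge_eq_one_iff_mem_frontier hFc h0).1 ?_
  rw [gauge_smul_of_nonneg (inv_nonneg.2 (gauge_nonneg x)), smul_eq_mul, inv_mul_cancel₀ hx]

lemma inv_inner_sub_smul_eq {x y₁ y₂ g : E} (h : ⟪x - y₁, g⟫ ≠ 0) :
    ⟪x - y₂, g⟫⁻¹ • g = (1 + ⟪y₁ - y₂, ⟪x - y₁, g⟫⁻¹ • g⟫)⁻¹ • ⟪x - y₁, g⟫⁻¹ • g := by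
  have hdiff : ⟪y₁ - y₂, g⟫ = ⟪x - y₂, g⟫ - ⟪x - y₁, g⟫ := by
    rw [← inner_sub_left, sub_sub_sub_cancel_left]
  rw [real_inner_smul_right, hdiff, smul_smul]
  congr 1
  rw [show 1 + ⟪x - y₁, g⟫⁻¹ * (⟪x - y₂, g⟫ - ⟪x - y₁, g⟫) = ⟪x - y₂, g⟫ * ⟪x - y₁, g⟫⁻¹ by
    field_simp; ring, mul_inv, inv_inv, mul_assoc, mul_inv_cancel₀ h, mul_one]

variable [CompleteSpace E]

lemma Convex.inner_sub_gradient_nonpos_of_isMaxOn {F : Set E} (hFc : Convex ℝ F) {f : E → ℝ}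
    {η z : E} (hη : η ∈ F) (hz : z ∈ F) (hmax : IsMaxOn f F η) (hf : DifferentiableAt ℝ f η) :
    ⟪z - η, gradient f η⟫ ≤ 0 := by
  rw [real_inner_comm, gradient, InnerProductSpace.toDual_symm_apply]
  exact hmax.localize.hasFDerivWithinAt_nonpos hf.hasFDerivAt.hasFDerivWithinAt
    (sub_mem_posTangentConeAt_of_segment_subset (hFc.segment_subset hη hz))

lemma Convex.eventually_add_smul_mem_of_inner_gradient_neg {F : Set E} (hFc : Convex ℝ F)
    (hFcl : IsClosed F) (h0 : F ∈ 𝓝 0) {f : E → ℝ} {ξ v : E} (hξ : ξ ∈ frontier F)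
    (hf : DifferentiableAt ℝ f ξ) (hfr : ∀ᶠ x in 𝓝 ξ, x ∈ frontier F → f x = 0)
    (hξg : 0 < ⟪ξ, gradient f ξ⟫) (hv : ⟪v, gradient f ξ⟫ < 0) :
    ∀ᶠ t in 𝓝[>] (0 : ℝ), ξ + t • v ∈ F := by
  set g := gradient f ξ
  have hgξ : gauge F ξ = 1 := (gauge_eq_one_iff_mem_frontier hFc h0).2 hξ
  -- If `ξ + t • v ∉ F`, its radial projection `w t` onto `∂F` is close to `ξ`, so `f (w t) = 0`;
  -- but `w t - ξ` lies in a cone where `⟪·, ∇f ξ⟫ < -c ‖·‖`, against the first-order expansion.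
  set w : ℝ → E := fun t => (gauge F (ξ + t • v))⁻¹ • (ξ + t • v)
  have hw : Tendsto w (𝓝 0) (𝓝 ξ) := by
    have hz : Tendsto (fun t : ℝ => ξ + t • v) (𝓝 0) (𝓝 ξ) := by
      simpa using tendsto_const_nhds.add ((tendsto_id (x := 𝓝 (0 : ℝ))).smul_const v)
    have h := ((((continuous_gauge hFc h0).tendsto ξ).comp hz).inv₀ (by simp [hgξ])).smul hz
    rwa [hgξ, inv_one, one_smul] at h
  obtain ⟨c, hc, hcone⟩ :=
    exists_pos_mul_norm_lt_neg_inner_add (x := -ξ) (by rwa [inner_neg_left, neg_lt_zero]) hv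
  have hTaylor := Asymptotics.isLittleO_iff.1 hf.hasFDerivAt.isLittleO (half_pos hc)
  filter_upwards [self_mem_nhdsWithin,
    (hw.mono_left nhdsWithin_le_nhds).eventually (hfr.and hTaylor)] with t (ht : 0 < t) ⟨hwf, hwT⟩
  by_contra hzF
  have hG : 1 < gauge F (ξ + t • v) := by
    by_contra h
    refine hzF ?_
    simpa [hFcl.closure_eq] using (gauge_le_one_iff_mem_closure hFc h0).1 (not_lt.1 h)
  set s := (gauge F (ξ + t • v))⁻¹ with hs
  have hs0 : 0 < s := inv_pos.2 (one_pos.trans hG)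
  have hwξ : w t - ξ = (1 - s) • -ξ + (s * t) • v := by simp only [w, ← hs]; module
  have hd : fderiv ℝ f ξ (w t - ξ) = ⟪w t - ξ, g⟫ := by
    rw [real_inner_comm]; exact InnerProductSpace.toDual_symm_apply.symm
  rw [hwf (inv_gauge_smul_mem_frontier hFc h0 (one_pos.trans hG).ne'), hfr.self_of_nhds hξ,
    sub_self, zero_sub, norm_neg, hd, hwξ, Real.norm_eq_abs] at hwT
  have hlt := hcone (1 - s) (s * t) (by linarith [inv_lt_one_of_one_lt₀ hG]) (mul_pos hs0 ht)
  linarith [neg_abs_le ⟪(1 - s) • -ξ + (s * t) • v, g⟫,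
    mul_nonneg hc.le (norm_nonneg ((1 - s) • -ξ + (s * t) • v))]

end

def ChatGrad {n : ℕ} (F : Set (Euc n)) (f : Euc n → ℝ) (r : ℝ) (η u : Euc n) : ℝ :=
  sInf {t | ∃ z, z ∈ F ∧ z ∈ planeP f η u ∧ r ≤ ‖η - z‖ ∧ t = ⟪η - z, gradient f η⟫}

lemma ChatShift_eq_inv_inner_mul_ChatGrad {n : ℕ} (F : Set (Euc n)) (f : Euc n → ℝ)
    {y η : Euc n} (hy : 0 ≤ ⟪η - y, gradient f η⟫) (r : ℝ) (u : Euc n) :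
    ChatShift F f y r η u = ⟪η - y, gradient f η⟫⁻¹ * ChatGrad F f r η u := by
  set c := ⟪η - y, gradient f η⟫⁻¹
  have hset : {t | ∃ z, z ∈ F ∧ z ∈ planeP f η u ∧ r ≤ ‖η - z‖ ∧
      t = ⟪η - z, c • gradient f η⟫} =
      c • {t | ∃ z, z ∈ F ∧ z ∈ planeP f η u ∧ r ≤ ‖η - z‖ ∧ t = ⟪η - z, gradient f η⟫} := by
    ext t
    simp only [Set.mem_ofPred_eq, Set.mem_smul_set, smul_eq_mul, real_inner_smul_right]
    constructor
    · rintro ⟨z, hzF, hzP, hr, rfl⟩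
      exact ⟨_, ⟨z, hzF, hzP, hr, rfl⟩, rfl⟩
    · rintro ⟨_, ⟨z, hzF, hzP, hr, rfl⟩, rfl⟩
      exact ⟨z, hzF, hzP, hr, rfl⟩
  rw [ChatShift, ChatGrad, hset, Real.sInf_smul_of_nonneg (inv_nonneg.2 hy), smul_eq_mul]

lemma ChatGrad_nonneg {n : ℕ} {F : Set (Euc n)} (hFc : Convex ℝ F) {f : Euc n → ℝ} {η : Euc n}
    (hη : η ∈ F) (hmax : IsMaxOn f F η) (hf : DifferentiableAt ℝ f η) (r : ℝ) (u : Euc n) :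
    0 ≤ ChatGrad F f r η u := by
  refine Real.sInf_nonneg ?_
  rintro _ ⟨z, hz, -, -, rfl⟩
  rw [← neg_sub, inner_neg_left, neg_nonneg]
  exact hFc.inner_sub_gradient_nonpos_of_isMaxOn hη hz hmax hf

lemma inner_sub_gradient_pos_of_mem_intrinsicInterior {n : ℕ} {F : Set (Euc n)}
    (hFc : Convex ℝ F) (hFcl : IsClosed F) (h0 : F ∈ 𝓝 0) {f : Euc n → ℝ} {ξ : Euc n}
    (hξ : ξ ∈ frontier F) (hf : DifferentiableAt ℝ f ξ) (hFf : F ⊆ {x | f x ≤ 0})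
    (hfr : ∀ᶠ x in 𝓝 ξ, x ∈ frontier F → f x = 0) (hgr : 0 < ⟪ξ, gradient f ξ⟫) {u y : Euc n}
    (hy : y ∈ intrinsicInterior ℝ (F ∩ planeP f ξ u)) : 0 < ⟪ξ - y, gradient f ξ⟫ := by
  set g := gradient f ξ
  have hξF : ξ ∈ F := hFcl.frontier_subset hξ
  have hmax : IsMaxOn f F ξ := fun x hx => (hFf hx).trans (hfr.self_of_nhds hξ).ge
  have hg : 0 < ⟪g, g⟫ := real_inner_self_pos.2 fun h => by simp [h] at hgr
  obtain ⟨t, hFt, ht⟩ := ((hFc.eventually_add_smul_mem_of_inner_gradient_neg hFcl h0 hξ hf hfr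
    hgr (v := -g) (by rwa [inner_neg_left, neg_lt_zero])).and self_mem_nhdsWithin).exists
  have hzP : ξ + t • -g ∈ planeP f ξ u := ⟨-t, 0, by simp only [g]; module⟩
  rw [inner_sub_left, sub_pos]
  refine inner_lt_of_mem_intrinsicInterior (S := F ∩ planeP f ξ u) (fun x hx => ?_)
    ⟨hFt, hzP⟩ ?_ hy
  · have h := hFc.inner_sub_gradient_nonpos_of_isMaxOn hξF hx.1 hmax hf
    rw [inner_sub_left] at h
    linarith
  · rw [inner_add_left, real_inner_smul_left, inner_neg_left]
    linarith [mul_pos (show (0 : ℝ) < t from ht) hg]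

lemma gammaShift_eq_inv_inner_mul_liminf {n : ℕ} {F : Set (Euc n)} (hFc : Convex ℝ F)
    (hFcl : IsClosed F) {f : Euc n → ℝ} (hFf : F ⊆ {x | f x ≤ 0}) {ξ y : Euc n}
    (hξ : ξ ∈ frontier F) (hf : ContDiffAt ℝ 1 f ξ) (hfr : ∀ᶠ x in 𝓝 ξ, x ∈ frontier F → f x = 0)
    (hy : 0 < ⟪ξ - y, gradient f ξ⟫) (i : Fin n) (u : Euc n) :
    gammaShift F f y i ξ u = ⟪ξ - y, gradient f ξ⟫⁻¹ *
      liminf (fun p : ℝ × Euc n => ChatGrad F f p.1 p.2 (uAt f i u p.2) / p.1 ^ 2)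
        ((𝓝[>] (0 : ℝ)) ×ˢ (𝓝 ξ ⊓ 𝓟 (frontier F))) := by
  set l := (𝓝[>] (0 : ℝ)) ×ˢ (𝓝 ξ ⊓ 𝓟 (frontier F))
  have : (𝓝 ξ ⊓ 𝓟 (frontier F)).NeBot :=
    mem_closure_iff_nhdsWithin_neBot.1 (subset_closure hξ)
  have hsnd : Tendsto Prod.snd l (𝓝 ξ) := tendsto_snd.mono_right inf_le_left
  have hgc : ContinuousAt (gradient f) ξ :=
    (InnerProductSpace.toDual ℝ (Euc n)).symm.continuous.continuousAt.comp
      (hf.continuousAt_fderiv one_ne_zero)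
  have hφ : Tendsto (fun η => ⟪η - y, gradient f η⟫) (𝓝 ξ) (𝓝 ⟪ξ - y, gradient f ξ⟫) :=
    (continuousAt_id.sub continuousAt_const).inner hgc
  have hW : ∀ᶠ p in l, 0 ≤ ChatGrad F f p.1 p.2 (uAt f i u p.2) / p.1 ^ 2 := by
    have hη : ∀ᶠ η in 𝓝 ξ ⊓ 𝓟 (frontier F),
        η ∈ F ∧ IsMaxOn f F η ∧ DifferentiableAt ℝ f η := by
      rw [eventually_inf_principal]
      filter_upwards [hfr, hf.eventually (by simp)] with η hη hC hηF
      exact ⟨hFcl.frontier_subset hηF, fun x hx => (hFf hx).trans (hη hηF).ge,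
        hC.differentiableAt one_ne_zero⟩
    filter_upwards [tendsto_snd.eventually hη] with p ⟨hηF, hmax, hd⟩
    exact div_nonneg (ChatGrad_nonneg hFc hηF hmax hd _ _) (sq_nonneg _)
  have heq : ∀ᶠ p in l, ChatShift F f y p.1 p.2 (uAt f i u p.2) / p.1 ^ 2 =
      ⟪p.2 - y, gradient f p.2⟫⁻¹ * (ChatGrad F f p.1 p.2 (uAt f i u p.2) / p.1 ^ 2) :=
    (hsnd.eventually (hφ.eventually (lt_mem_nhds hy))).mono fun p hp => by
      rw [ChatShift_eq_inv_inner_mul_ChatGrad F f hp.le, mul_div_assoc]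
  rw [gammaShift, liminf_congr heq]
  exact liminf_mul_of_tendsto ((hφ.comp hsnd).inv₀ hy.ne') (inv_pos.2 hy) hW

theorem gammaDir_translation_invariant_general
    {n : ℕ} (F : Set (Euc n)) (hF : IsCompact F) (hFc : Convex ℝ F)
    (h0 : (0 : Euc n) ∈ interior F) (ξ : Euc n) (hξ : ξ ∈ frontier F)
    (f : Euc n → ℝ) (δ : ℝ) (hδ : 0 < δ) (hf : ContDiffOn ℝ 2 f (Metric.ball ξ δ))
    (hFf : F ⊆ {x | f x ≤ 0}) (hgr : 0 < ⟪ξ, gradient f ξ⟫)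
    (hbd : ∀ x ∈ Metric.ball ξ δ, (x ∈ frontier F ↔ f x = 0))
    (i : Fin n)
    (j : Fin n)
    (y₁ y₂ : Euc n)
    (hy₁ : y₁ ∈ intrinsicInterior ℝ (F ∩ planeP f ξ (uAt f i (EuclideanSpace.single j 1) ξ)))
    (hy₂ : y₂ ∈ intrinsicInterior ℝ (F ∩ planeP f ξ (uAt f i (EuclideanSpace.single j 1) ξ)))
    (ξs₁ ξs₂ : Euc n)
    (hξs₁ : ξs₁ = (⟪ξ - y₁, gradient f ξ⟫)⁻¹ • gradient f ξ)
    (hξs₂ : ξs₂ = (⟪ξ - y₂, gradient f ξ⟫)⁻¹ • gradient f ξ) :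
    ‖ξs₁‖⁻¹ * gammaShift F f y₁ i ξ (EuclideanSpace.single j 1) =
        ‖ξs₂‖⁻¹ * gammaShift F f y₂ i ξ (EuclideanSpace.single j 1) ∧
      ξs₂ = (1 + ⟪y₁ - y₂, ξs₁⟫)⁻¹ • ξs₁ := by
  set S := F ∩ planeP f ξ (uAt f i (EuclideanSpace.single j 1) ξ)
  set L := liminf (fun p : ℝ × Euc n => ChatGrad F f p.1 p.2
    (uAt f i (EuclideanSpace.single j 1) p.2) / p.1 ^ 2) ((𝓝[>] (0 : ℝ)) ×ˢ (𝓝 ξ ⊓ 𝓟 (frontier F)))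
  have hC1 : ContDiffAt ℝ 1 f ξ := (hf.contDiffAt (ball_mem_nhds ξ hδ)).of_le one_le_two
  have hfr : ∀ᶠ x in 𝓝 ξ, x ∈ frontier F → f x = 0 :=
    Filter.mem_of_superset (ball_mem_nhds ξ hδ) fun x hx => (hbd x hx).1
  have hpos : ∀ y ∈ intrinsicInterior ℝ S, 0 < ⟪ξ - y, gradient f ξ⟫ := fun y hy =>
    inner_sub_gradient_pos_of_mem_intrinsicInterior hFc hF.isClosed
      (mem_interior_iff_mem_nhds.1 h0) hξ (hC1.differentiableAt one_ne_zero) hFf hfr hgr hy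
  have hnormalized : ∀ y ∈ intrinsicInterior ℝ S, ‖⟪ξ - y, gradient f ξ⟫⁻¹ • gradient f ξ‖⁻¹ *
      gammaShift F f y i ξ (EuclideanSpace.single j 1) = ‖gradient f ξ‖⁻¹ * L := fun y hy => by
    have hy := hpos y hy
    rw [gammaShift_eq_inv_inner_mul_liminf hFc hF.isClosed hFf hξ hC1 hfr hy, norm_smul,
      norm_inv, Real.norm_of_nonneg hy.le, mul_inv, inv_inv]
    field_simp
    rfl
  subst hξs₁ hξs₂
  exact ⟨(hnormalized y₁ hy₁).trans (hnormalized y₂ hy₂).symm,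
    inv_inner_sub_smul_eq (hpos y₁ hy₁).ne'⟩

/-- Translation invariance of the normalized directional lower curvature: for base points
`y₁, y₂` in the relative interior of `F ∩ P(ξ, u^j(ξ))`, with `ξₖ* = ∇f(ξ)/⟨ξ - yₖ, ∇f(ξ)⟩`
the unique dual vectors of the translated bodies, the quantities `γ̂/‖ξₖ*‖` agree, and
`ξ₂* = ξ₁*/(1 + ⟨y₁ - y₂, ξ₁*⟩)` is collinear with `ξ₁*`. -/
theorem gammaDir_translation_invariant
    {n : ℕ} (hn : 2 ≤ n) (F : Set (Euc n)) (hF : IsCompact F) (hFc : Convex ℝ F)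
    (h0 : (0 : Euc n) ∈ interior F) (ξ : Euc n) (hξ : ξ ∈ frontier F)
    (f : Euc n → ℝ) (δ : ℝ) (hδ : 0 < δ) (hf : ContDiffOn ℝ 2 f (Metric.ball ξ δ))
    (hFf : F ⊆ {x | f x ≤ 0}) (hgr : 0 < ⟪ξ, gradient f ξ⟫)
    (hbd : ∀ x ∈ Metric.ball ξ δ, (x ∈ frontier F ↔ f x = 0))
    (i : Fin n) (hi : gradient f ξ i ≠ 0) (hifirst : ∀ k < i, gradient f ξ k = 0)
    (j : Fin n) (hj : j ≠ i)
    (y₁ y₂ : Euc n)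
    (hy₁ : y₁ ∈ intrinsicInterior ℝ (F ∩ planeP f ξ (uAt f i (EuclideanSpace.single j 1) ξ)))
    (hy₂ : y₂ ∈ intrinsicInterior ℝ (F ∩ planeP f ξ (uAt f i (EuclideanSpace.single j 1) ξ)))
    (ξs₁ ξs₂ : Euc n)
    (hξs₁ : ξs₁ = (⟪ξ - y₁, gradient f ξ⟫)⁻¹ • gradient f ξ)
    (hξs₂ : ξs₂ = (⟪ξ - y₂, gradient f ξ⟫)⁻¹ • gradient f ξ) :
    ‖ξs₁‖⁻¹ * gammaShift F f y₁ i ξ (EuclideanSpace.single j 1) =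
        ‖ξs₂‖⁻¹ * gammaShift F f y₂ i ξ (EuclideanSpace.single j 1) ∧
      ξs₂ = (1 + ⟪y₁ - y₂, ξs₁⟫)⁻¹ • ξs₁ :=
  gammaDir_translation_invariant_general F hF hFc h0 ξ hξ f δ hδ hf hFf hgr hbd i j y₁ y₂ hy₁ hy₂
    ξs₁ ξs₂ hξs₁ hξs₂
end
end

section
/- Let F ⊂ R^n be compact convex with 0 ∈ int F and ξ ∈ ∂F as in the standing C² hypotheses. If there exists u(ξ) ∈ T_F(ξ)\{0} with γ̂_F(ξ, u(ξ)) > 0, then for every η ∈ ∂F close enough to ξ, with η* := ∇f(η)/⟨η, ∇f(η)⟩, one has J_F(η*) ∩ P(η, u(η)) = {η}. -/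
open RealInnerProductSpace Filter Metric Topology

noncomputable section

/-- If the directional lower curvature is positive in some tangent direction `u`, then for
every boundary point `η` close enough to `ξ`, the face `J_F(η*)` meets the plane
`P(η, u(η))` only at `η`. -/
theorem exposed_in_plane_near_of_gammaDir_pos
    {n : ℕ} (hn : 2 ≤ n) (F : Set (Euc n)) (hF : IsCompact F) (hFc : Convex ℝ F)
    (h0 : (0 : Euc n) ∈ interior F) (ξ : Euc n) (hξ : ξ ∈ frontier F)
    (f : Euc n → ℝ) (δ : ℝ) (hδ : 0 < δ) (hf : ContDiffOn ℝ 2 f (Metric.ball ξ δ))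
    (hFf : F ⊆ {x | f x ≤ 0}) (hgr : 0 < ⟪ξ, gradient f ξ⟫)
    (hbd : ∀ x ∈ Metric.ball ξ δ, (x ∈ frontier F ↔ f x = 0))
    (i : Fin n) (hi : gradient f ξ i ≠ 0) (hifirst : ∀ k < i, gradient f ξ k = 0)
    (u : Euc n) (hu : u ∈ tangentHyp F ξ) (hu0 : u ≠ 0)
    (hpos : 0 < gammaDir F f i ξ u) :
    ∃ ε > 0, ∀ η ∈ frontier F ∩ Metric.ball ξ ε,
      {y | y ∈ frontier F ∧ ⟪y, etaStar f η⟫ = 1} ∩ planeP f η (uAt f i u η) = {η} := by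
  classical
  -- Extract a positive lower bound `c` for `Chat / r²` eventually.
  set L := ((𝓝[>] (0:ℝ)) ×ˢ (𝓝 ξ ⊓ 𝓟 (frontier F))) with hL
  set φ := (fun p : ℝ × Euc n => Chat F f p.1 p.2 (uAt f i u p.2) / p.1 ^ 2) with hφdef
  have hsup : 0 < sSup {a | ∀ᶠ p in L, a ≤ φ p} := by
    rw [← Filter.liminf_eq]; exact hpos
  obtain ⟨c, hcS, hc0⟩ : ∃ c ∈ {a | ∀ᶠ p in L, a ≤ φ p}, 0 < c := by
    by_contra h
    push_neg at h
    have : sSup {a | ∀ᶠ p in L, a ≤ φ p} ≤ 0 := Real.sSup_nonpos (fun x hx => h x hx)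
    linarith
  -- Unfold the eventual statement in the product filter.
  obtain ⟨s, hs, T, hT, hsT⟩ := Filter.mem_prod_iff.mp hcS
  obtain ⟨r₀, hr₀, hr₀sub⟩ := Metric.mem_nhdsWithin_iff.mp hs
  have hT' : {x | x ∈ frontier F → x ∈ T} ∈ 𝓝 ξ := Filter.mem_inf_principal.mp hT
  obtain ⟨ε₁, hε₁, hε₁sub⟩ := Metric.mem_nhds_iff.mp hT'
  -- positivity of ⟪η, ∇f η⟫ near ξ
  have hgradc : ContinuousOn (fun x => gradient f x) (Metric.ball ξ δ) := by
    have hD : ContinuousOn (fderiv ℝ f) (Metric.ball ξ δ) :=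
      hf.continuousOn_fderiv_of_isOpen Metric.isOpen_ball one_le_two
    exact ((InnerProductSpace.toDual ℝ (Euc n)).symm.continuous).comp_continuousOn hD
  have hca : ContinuousAt (fun x => ⟪x, gradient f x⟫) ξ := by
    have : ContinuousOn (fun x => ⟪x, gradient f x⟫) (Metric.ball ξ δ) :=
      ContinuousOn.inner (continuousOn_id) hgradc
    exact this.continuousAt (Metric.isOpen_ball.mem_nhds (Metric.mem_ball_self hδ))
  have hev : ∀ᶠ x in 𝓝 ξ, 0 < ⟪x, gradient f x⟫ := hca.eventually (eventually_gt_nhds hgr)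
  obtain ⟨ε₂, hε₂, hε₂pos⟩ := Metric.eventually_nhds_iff.mp hev
  -- F is closed and bounded
  have hFcl : IsClosed F := hF.isClosed
  have hfr : frontier F ⊆ F := hFcl.frontier_subset
  obtain ⟨M, hx₀⟩ := hF.isBounded.exists_norm_le
  refine ⟨min ε₁ ε₂, lt_min hε₁ hε₂, ?_⟩
  rintro η ⟨hηF, hηball⟩
  have hηb1 : η ∈ Metric.ball ξ ε₁ := Metric.mem_ball.mpr (lt_of_lt_of_le hηball (min_le_left _ _))
  have hηb2 : dist η ξ < ε₂ := lt_of_lt_of_le hηball (min_le_right _ _)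
  have hg : 0 < ⟪η, gradient f η⟫ := hε₂pos hηb2
  have hηT : η ∈ T := hε₁sub hηb1 hηF
  have hη1 : ⟪η, etaStar f η⟫ = 1 := by
    rw [etaStar, real_inner_smul_right]
    exact inv_mul_cancel₀ (ne_of_gt hg)
  -- the key lower bound on Chat for small r
  have hkey : ∀ r : ℝ, 0 < r → r < r₀ → c * r ^ 2 ≤ Chat F f r η (uAt f i u η) := by
    intro r hr1 hr2
    have hrs : r ∈ s := hr₀sub ⟨by simpa [Real.dist_eq, abs_of_pos hr1] using hr2, hr1⟩
    have hmem : (r, η) ∈ s ×ˢ T := ⟨hrs, hηT⟩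
    have := hsT hmem
    have hφr : c ≤ Chat F f r η (uAt f i u η) / r ^ 2 := this
    exact (le_div_iff₀ (by positivity)).mp hφr
  ext y
  simp only [Set.mem_inter_iff, Set.mem_setOf_eq, Set.mem_singleton_iff]
  constructor
  · rintro ⟨⟨hyF, hy1⟩, hyP⟩
    by_contra hne
    have hd : 0 < ‖η - y‖ := by
      rw [norm_pos_iff, sub_ne_zero]
      exact fun h => hne h.symm
    set d := ‖η - y‖ with hdd
    have hinner0 : ⟪η - y, etaStar f η⟫ = 0 := by
      rw [inner_sub_left, hη1, hy1, sub_self]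
    set t := min 1 (r₀ / (2 * d)) with htdef
    have ht0 : 0 < t := lt_min one_pos (by positivity)
    have ht1 : t ≤ 1 := min_le_left _ _
    set z := η + t • (y - η) with hzdef
    have hzF : z ∈ F := by
      have : z = (1 - t) • η + t • y := by rw [hzdef]; module
      rw [this]
      exact hFc (hfr hηF) (hfr hyF) (by linarith) (le_of_lt ht0) (by ring)
    obtain ⟨a, b, hab⟩ := hyP
    have hzP : z ∈ planeP f η (uAt f i u η) := by
      refine ⟨t * a, t * b, ?_⟩
      rw [hzdef, hab]; module
    have hηz : η - z = t • (η - y) := by rw [hzdef]; module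
    have hznorm : ‖η - z‖ = t * d := by
      rw [hηz, norm_smul, Real.norm_eq_abs, abs_of_pos ht0]
    have hzin : ⟪η - z, etaStar f η⟫ = 0 := by
      rw [hηz, real_inner_smul_left, hinner0, mul_zero]
    set r := t * d with hrdef
    have hr1 : 0 < r := mul_pos ht0 hd
    have hr2 : r < r₀ := by
      have : t ≤ r₀ / (2 * d) := min_le_right _ _
      have h1 : r ≤ (r₀ / (2 * d)) * d := by
        apply mul_le_mul_of_nonneg_right this (le_of_lt hd)
      have h2 : (r₀ / (2 * d)) * d = r₀ / 2 := by field_simp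
      rw [h2] at h1
      linarith
    have hbdd : BddBelow {t | ∃ y, y ∈ F ∧ y ∈ planeP f η (uAt f i u η) ∧ r ≤ ‖η - y‖ ∧
        t = ⟪η - y, etaStar f η⟫} := by
      refine ⟨-((‖η‖ + M) * ‖etaStar f η‖), ?_⟩
      rintro t' ⟨y', hy'F, -, -, rfl⟩
      have h1 : |⟪η - y', etaStar f η⟫| ≤ ‖η - y'‖ * ‖etaStar f η‖ := abs_real_inner_le_norm _ _
      have h2 : ‖η - y'‖ ≤ ‖η‖ + ‖y'‖ := norm_sub_le _ _
      have h3 : ‖y'‖ ≤ M := hx₀ y' hy'F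
      have h4 := neg_abs_le ⟪η - y', etaStar f η⟫
      have h5 : (0:ℝ) ≤ ‖etaStar f η‖ := norm_nonneg _
      nlinarith
    have hle : Chat F f r η (uAt f i u η) ≤ 0 :=
      csInf_le hbdd ⟨z, hzF, hzP, le_of_eq hznorm.symm, hzin.symm⟩
    have := hkey r hr1 hr2
    nlinarith [mul_pos hc0 (pow_pos hr1 2)]
  · rintro rfl
    exact ⟨⟨hηF, hη1⟩, 0, 0, by simp⟩
end
end

section
/- (Comparison with Goldman's formula, n ≥ 3) Let the intersection curve ∂F ∩ P(ξ, u^j(ξ)) be given near ξ by the n−1 implicit equations f = 0, p_{k₁ξ} = 0, …, p_{k_{n−2}ξ} = 0. Then Goldman's curvature of this intersection curve at ξ equals k_G(ξ) = |f_{x_i x_i}(ξ) f_{x_j}(ξ)² − 2 f_{x_i}(ξ) f_{x_j}(ξ) f_{x_i x_j}(ξ) + f_{x_j x_j}(ξ) f_{x_i}(ξ)²| / (‖∇f(ξ)‖ (f_{x_i}(ξ)² + f_{x_j}(ξ)²)). -/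
open RealInnerProductSpace Filter Metric Topology

noncomputable section

/-- The square matrix whose determinant is the `c'`-th component of the formal
determinant tangent vector `Tan(f, p_{k₁ξ}, …, p_{k_{n−2}ξ})(η)`: one row (row `i`) is
the basis-selector row `e_{c'}`, one row (row `j`) is `∇f(η)`, and for `k ∉ {i, j}` the
row `k` is `∇p_{kξ}`, where
`p_{kξ}(η) = η_k − ξ_k + a_{ki}(ξ)(η_i − ξ_i) + a_{kj}(ξ)(η_j − ξ_j)` and
`a_{kl}(ξ) = −f_{x_l}(ξ)f_{x_k}(ξ)/(f_{x_i}(ξ)² + f_{x_j}(ξ)²)`. -/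
def goldmanMat {m : ℕ} (f : Euc m → ℝ) (ξ : Euc m) (i j : Fin m) (η : Euc m)
    (c' : Fin m) : Matrix (Fin m) (Fin m) ℝ :=
  fun r c =>
    if r = i then (if c = c' then 1 else 0)
    else if r = j then gradient f η c
    else if c = r then 1
    else if c = i then
      -(gradient f ξ i * gradient f ξ r) / (gradient f ξ i ^ 2 + gradient f ξ j ^ 2)
    else if c = j then
      -(gradient f ξ j * gradient f ξ r) / (gradient f ξ i ^ 2 + gradient f ξ j ^ 2)
    else 0

/-- The formal determinant tangent vector of the intersection curve
`∂F ∩ P(ξ, u^j(ξ))`, as a function of `η`. -/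
def goldmanTan {m : ℕ} (f : Euc m → ℝ) (ξ : Euc m) (i j : Fin m) (η : Euc m) : Euc m :=
  (WithLp.equiv 2 (Fin m → ℝ)).symm fun c' => Matrix.det (goldmanMat f ξ i j η c')

/-- Squared magnitude of the exterior product: `‖u ∧ v‖² = Σ_{r<s} (u_r v_s − u_s v_r)²`. -/
def wedgeNormSq {m : ℕ} (u v : Euc m) : ℝ :=
  ∑ p ∈ Finset.univ.filter (fun p : Fin m × Fin m => p.1 < p.2),
    (u p.1 * v p.2 - u p.2 * v p.1) ^ 2

/-- Goldman's curvature `k_G = ‖(Tan ∗ ∇Tan) ∧ Tan‖/‖Tan‖³` of the curve defined by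
`n − 1` implicit hypersurfaces; `Tan ∗ ∇Tan` is the derivative of `Tan` at `ξ` in the
direction `Tan(ξ)`. -/
def goldmanCurv {m : ℕ} (f : Euc m → ℝ) (ξ : Euc m) (i j : Fin m) : ℝ :=
  Real.sqrt (wedgeNormSq
      (fderiv ℝ (goldmanTan f ξ i j) ξ (goldmanTan f ξ i j ξ)) (goldmanTan f ξ i j ξ)) /
    ‖goldmanTan f ξ i j ξ‖ ^ 3


/-!
The determinant matrix is a rank-four perturbation of the identity, so the matrix determinant
lemma shows that the determinant tangent vector is
`Tan(η) = (⟪g, ∇f(η)⟫ w - ⟪w, ∇f(η)⟫ g) / (g_i² + g_j²)`, where `g = ∇f(ξ)` and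
`w = g_j e_i - g_i e_j` spans the tangent line of the curve at `ξ`. Hence
`Tan(ξ) = (‖g‖² / ‖w‖²) w`, and the derivative of `Tan` in this direction has `g`-component
`-(‖g‖² / ‖w‖⁴) ⟪∇²f(ξ) w, w⟫`. As `g ⟂ w`, Lagrange's identity for `‖u ∧ v‖` turns Goldman's
quotient into `|⟪∇²f(ξ) w, w⟫| / (‖g‖ ‖w‖²)`, and `⟪∇²f(ξ) w, w⟫` is the quadratic form of the
statement by symmetry of the Hessian.
-/

namespace Matrix

variable {R ι : Type*} [CommRing R] [Fintype ι] [DecidableEq ι]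

theorem det_eq_of_rows_eq_single_sub {M : Matrix ι ι R} {i j : ι} (hij : i ≠ j)
    {x y α β : ι → R} (hαi : α i = 1) (hαj : α j = 0) (hβi : β i = 0) (hβj : β j = 1)
    (hMi : M i = x) (hMj : M j = y)
    (hM : ∀ k, k ≠ i → k ≠ j →
      M k = Pi.single k 1 - α k • Pi.single i 1 - β k • Pi.single j 1) :
    M.det = (α ⬝ᵥ x) * (β ⬝ᵥ y) - (β ⬝ᵥ x) * (α ⬝ᵥ y) := by
  let U : Matrix ι (Fin 4) R :=
    of fun r => ![(Pi.single i 1 : ι → R) r, (Pi.single j 1 : ι → R) r, α r, β r]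
  let V : Matrix (Fin 4) ι R := of ![x, y, -Pi.single i 1, -Pi.single j 1]
  have hUV : M = 1 + U * V := by
    ext r c
    simp only [add_apply, one_apply, mul_apply, Fin.sum_univ_four, U, V, of_apply]
    by_cases hri : r = i
    · subst hri; simp [hMi, Pi.single_apply, hαi, hβi, hij, eq_comm]
    by_cases hrj : r = j
    · subst hrj; simp [hMj, Pi.single_apply, hαj, hβj, hri, eq_comm]
    simp [hM r hri hrj, Pi.single_apply, hri, hrj, eq_comm, sub_eq_add_neg, add_assoc]
  have hVU : 1 + V * U = !![1 + x i, x j, x ⬝ᵥ α, x ⬝ᵥ β; y i, 1 + y j, y ⬝ᵥ α, y ⬝ᵥ β;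
      -1, 0, 0, 0; 0, -1, 0, 0] := by
    ext p q
    fin_cases p <;> fin_cases q <;>
      simp [U, V, vecMul, dotProduct, Pi.single_apply, hαi, hαj, hβi, hβj, hij.symm, add_comm,
        mul_comm]
  rw [hUV, det_one_add_mul_comm, hVU]
  simp +decide [det_succ_row_zero, Fin.sum_univ_succ, Fin.succAbove_of_castSucc_lt,
    Fin.succAbove_of_le_castSucc, dotProduct_comm]
  ring

end Matrix

theorem Finset.two_nsmul_sum_filter_fst_lt {ι M : Type*} [LinearOrder ι] [Fintype ι]
    [AddCommMonoid M] (h : ι × ι → M) (hswap : ∀ p, h p.swap = h p)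
    (hdiag : ∀ r, h (r, r) = 0) :
    2 • ∑ p with p.1 < p.2, h p = ∑ p, h p := by
  have hsplit (p : ι × ι) :
      h p = (if p.1 < p.2 then h p else 0) + (if p.2 < p.1 then h p else 0) := by
    obtain ⟨r, s⟩ := p
    rcases lt_trichotomy r s with hrs | rfl | hrs
    · simp [hrs, hrs.not_gt]
    · simp [hdiag]
    · simp [hrs, hrs.not_gt]
  have hflip : ∑ p : ι × ι, (if p.2 < p.1 then h p else 0) =
      ∑ p : ι × ι, (if p.1 < p.2 then h p else 0) :=
    Fintype.sum_equiv (Equiv.prodComm ι ι) _ _ fun p => by simp [hswap]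
  calc 2 • ∑ p with p.1 < p.2, h p
      = ∑ p : ι × ι, (if p.1 < p.2 then h p else 0) +
          ∑ p : ι × ι, (if p.2 < p.1 then h p else 0) := by
        rw [hflip, two_nsmul, Finset.sum_filter]
    _ = ∑ p, h p := by
        rw [← Finset.sum_add_distrib]
        exact Finset.sum_congr rfl fun p _ => (hsplit p).symm

section Wedge

variable {n : ℕ}

theorem wedgeNormSq_eq_inner (u v : Euc n) :
    wedgeNormSq u v = ⟪u, u⟫ * ⟪v, v⟫ - ⟪u, v⟫ ^ 2 := by
  let g : Fin n → Fin n → ℝ := fun r s => u r ^ 2 * v s ^ 2 - u r * v r * (u s * v s)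
  have hgram : ⟪u, u⟫ * ⟪v, v⟫ - ⟪u, v⟫ ^ 2 = ∑ r, ∑ s, g r s := by
    simp only [g, EuclideanSpace.inner_eq_star_dotProduct, dotProduct, star_trivial, sq,
      Finset.sum_mul_sum, ← Finset.sum_sub_distrib]
    exact Finset.sum_congr rfl fun r _ => Finset.sum_congr rfl fun s _ => by ring
  have hfull : ∑ p : Fin n × Fin n, (u p.1 * v p.2 - u p.2 * v p.1) ^ 2 =
      2 * (⟪u, u⟫ * ⟪v, v⟫ - ⟪u, v⟫ ^ 2) := by
    calc ∑ p : Fin n × Fin n, (u p.1 * v p.2 - u p.2 * v p.1) ^ 2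
        = ∑ r, ∑ s, (g r s + g s r) := by
          rw [Fintype.sum_prod_type]
          exact Finset.sum_congr rfl fun r _ => Finset.sum_congr rfl fun s _ => by ring
      _ = 2 * (⟪u, u⟫ * ⟪v, v⟫ - ⟪u, v⟫ ^ 2) := by
          rw [hgram, two_mul]
          simp only [Finset.sum_add_distrib]
          exact congrArg _ Finset.sum_comm
  have hhalf := Finset.two_nsmul_sum_filter_fst_lt
    (fun p : Fin n × Fin n => (u p.1 * v p.2 - u p.2 * v p.1) ^ 2)
    (fun p => by simp only [Prod.fst_swap, Prod.snd_swap]; ring) (fun r => by simp)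
  rw [two_nsmul, hfull] at hhalf
  unfold wedgeNormSq
  linarith

theorem sqrt_wedgeNormSq_div_norm_pow_three {g w : Euc n} (hwg : ⟪w, g⟫ = 0)
    (a b : ℝ) {s : ℝ} (hs : 0 < s) :
    √(wedgeNormSq (a • w - b • g) (s • w)) / ‖s • w‖ ^ 3 = |b| * ‖g‖ / (s ^ 2 * ‖w‖ ^ 2) := by
  have hwedge : wedgeNormSq (a • w - b • g) (s • w) = (|b| * s * ‖g‖ * ‖w‖) ^ 2 := by
    rw [wedgeNormSq_eq_inner, real_inner_self_eq_norm_sq, real_inner_self_eq_norm_sq]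
    simp only [norm_sub_sq_real, norm_smul, inner_sub_left, real_inner_smul_left,
      real_inner_smul_right, real_inner_self_eq_norm_sq, hwg, real_inner_comm w g, mul_pow,
      Real.norm_eq_abs, sq_abs]
    ring
  rw [hwedge, Real.sqrt_sq (by positivity), norm_smul, Real.norm_eq_abs, abs_of_pos hs]
  rcases eq_or_ne w 0 with rfl | hw
  · simp
  have hw_pos : 0 < ‖w‖ := norm_pos_iff.2 hw
  field_simp

end Wedge

section Hessian

variable {n : ℕ} {f : Euc n → ℝ} {ξ : Euc n}

theorem hessQ_eq_fderiv_fderiv (u v : Euc n) :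
    hessQ f ξ u v = fderiv ℝ (fderiv ℝ f) ξ u v := by
  have hgrad : gradient f = (InnerProductSpace.toDual ℝ (Euc n)).symm ∘ fderiv ℝ f := rfl
  rw [hessQ, hgrad, LinearIsometryEquiv.comp_fderiv]
  exact InnerProductSpace.toDual_symm_apply

theorem ContDiffAt.hessQ_comm (hf : ContDiffAt ℝ 2 f ξ) (u v : Euc n) :
    hessQ f ξ u v = hessQ f ξ v u := by
  rw [hessQ_eq_fderiv_fderiv, hessQ_eq_fderiv_fderiv]
  exact hf.isSymmSndFDerivAt (by simp) u v

theorem ContDiffAt.differentiableAt_gradient (hf : ContDiffAt ℝ 2 f ξ) :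
    DifferentiableAt ℝ (gradient f) ξ :=
  (InnerProductSpace.toDual ℝ (Euc n)).symm.differentiableAt.comp ξ
    ((hf.fderiv_right (m := 1) (by norm_num)).differentiableAt one_ne_zero)

end Hessian

section PlaneTangent

variable {n : ℕ} {i j : Fin n}

def planeTangent (g : Euc n) (i j : Fin n) : Euc n :=
  g j • EuclideanSpace.single i 1 - g i • EuclideanSpace.single j 1

theorem planeTangent_apply_left (hij : i ≠ j) (g : Euc n) : planeTangent g i j i = g j := by
  simp [planeTangent, hij]

theorem planeTangent_apply_right (hij : i ≠ j) (g : Euc n) : planeTangent g i j j = -g i := by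
  simp [planeTangent, hij.symm]

theorem inner_planeTangent_left (g v : Euc n) :
    ⟪planeTangent g i j, v⟫ = g j * v i - g i * v j := by
  simp [planeTangent, inner_sub_left, real_inner_smul_left, EuclideanSpace.inner_single_left]

theorem inner_planeTangent_self_left (g : Euc n) : ⟪planeTangent g i j, g⟫ = 0 := by
  rw [inner_planeTangent_left]
  ring

theorem norm_planeTangent_sq (hij : i ≠ j) (g : Euc n) :
    ‖planeTangent g i j‖ ^ 2 = g i ^ 2 + g j ^ 2 := by
  rw [← real_inner_self_eq_norm_sq, inner_planeTangent_left, planeTangent_apply_left hij,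
    planeTangent_apply_right hij]
  ring

theorem ContDiffAt.hessQ_planeTangent {f : Euc n → ℝ} {ξ : Euc n} (hf : ContDiffAt ℝ 2 f ξ)
    (g : Euc n) :
    hessQ f ξ (planeTangent g i j) (planeTangent g i j) =
      hessQ f ξ (EuclideanSpace.single i 1) (EuclideanSpace.single i 1) * g j ^ 2 -
        2 * g i * g j * hessQ f ξ (EuclideanSpace.single i 1) (EuclideanSpace.single j 1) +
        hessQ f ξ (EuclideanSpace.single j 1) (EuclideanSpace.single j 1) * g i ^ 2 := by
  have hsymm := hf.hessQ_comm (EuclideanSpace.single j 1) (EuclideanSpace.single i 1)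
  simp only [hessQ, planeTangent, map_sub, map_smul, inner_sub_left, inner_sub_right,
    real_inner_smul_left, real_inner_smul_right] at hsymm ⊢
  rw [hsymm]
  ring

theorem det_of_rows_eq_planeTangent (hij : i ≠ j) {g y : Euc n} (hD : g i ^ 2 + g j ^ 2 ≠ 0)
    {M : Matrix (Fin n) (Fin n) ℝ} {c : Fin n} (hMi : M i = Pi.single c 1) (hMj : M j = y)
    (hM : ∀ k, k ≠ i → k ≠ j → M k = Pi.single k 1 -
      (g i * g k / (g i ^ 2 + g j ^ 2)) • Pi.single i 1 -
      (g j * g k / (g i ^ 2 + g j ^ 2)) • Pi.single j 1) :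
    M.det = ((⟪g, y⟫ / (g i ^ 2 + g j ^ 2)) • planeTangent g i j -
      (⟪planeTangent g i j, y⟫ / (g i ^ 2 + g j ^ 2)) • g) c := by
  set w := planeTangent g i j
  -- `(α, β)` is the basis of `span {g, w}` dual to `(e_i, e_j)`.
  set α : Euc n := (g i ^ 2 + g j ^ 2)⁻¹ • (g i • g + g j • w)
  set β : Euc n := (g i ^ 2 + g j ^ 2)⁻¹ • (g j • g - g i • w)
  have hw (k : Fin n) : w k = (if k = i then g j else 0) - (if k = j then g i else 0) := by
    simp [w, planeTangent, PiLp.single_apply]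
  have hαi : α i = 1 := by simp [α, hw, hij, ← sq, ← mul_add, hD]
  have hαj : α j = 0 := by simp [α, hw, hij.symm, mul_comm]
  have hβi : β i = 0 := by simp [β, hw, hij, mul_comm]
  have hβj : β j = 1 := by simp [β, hw, hij.symm, ← sq, add_comm, hD]
  have hrow (k : Fin n) (hki : k ≠ i) (hkj : k ≠ j) :
      M k = Pi.single k 1 - α k • Pi.single i 1 - β k • Pi.single j 1 := by
    rw [hM k hki hkj]
    simp [α, β, hw, hki, hkj, inv_mul_eq_div]
  have hinner (u : Euc n) : u.ofLp ⬝ᵥ y.ofLp = ⟪u, y⟫ := by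
    rw [EuclideanSpace.inner_eq_star_dotProduct, star_trivial, dotProduct_comm]
  rw [Matrix.det_eq_of_rows_eq_single_sub hij hαi hαj hβi hβj hMi hMj hrow, hinner, hinner,
    dotProduct_single, dotProduct_single]
  simp only [α, β, PiLp.smul_apply, PiLp.add_apply, PiLp.sub_apply, smul_eq_mul, mul_one,
    real_inner_smul_left, inner_add_left, inner_sub_left]
  field_simp
  ring

end PlaneTangent

section GoldmanTangent

variable {n : ℕ} {f : Euc n → ℝ} {ξ : Euc n} {i j : Fin n}

theorem goldmanMat_row_of_ne (hij : i ≠ j) {η : Euc n} {c k : Fin n} (hki : k ≠ i)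
    (hkj : k ≠ j) :
    goldmanMat f ξ i j η c k = Pi.single k 1 -
      (gradient f ξ i * gradient f ξ k / (gradient f ξ i ^ 2 + gradient f ξ j ^ 2)) •
        Pi.single i 1 -
      (gradient f ξ j * gradient f ξ k / (gradient f ξ i ^ 2 + gradient f ξ j ^ 2)) •
        Pi.single j 1 := by
  funext col
  simp only [goldmanMat, hki, hkj, if_false, Pi.sub_apply, Pi.smul_apply, Pi.single_apply,
    smul_eq_mul]
  split_ifs <;> simp_all [neg_div]

theorem goldmanMat_row_left {η : Euc n} {c : Fin n} :
    goldmanMat f ξ i j η c i = Pi.single c 1 := by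
  funext col
  simp [goldmanMat, Pi.single_apply]

theorem goldmanMat_row_right (hij : i ≠ j) {η : Euc n} {c : Fin n} :
    goldmanMat f ξ i j η c j = gradient f η := by
  funext col
  simp [goldmanMat, hij.symm]

theorem goldmanTan_eq (hij : i ≠ j) (hD : gradient f ξ i ^ 2 + gradient f ξ j ^ 2 ≠ 0)
    (η : Euc n) :
    goldmanTan f ξ i j η =
      (⟪gradient f ξ, gradient f η⟫ / (gradient f ξ i ^ 2 + gradient f ξ j ^ 2)) •
          planeTangent (gradient f ξ) i j -
        (⟪planeTangent (gradient f ξ) i j, gradient f η⟫ /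
          (gradient f ξ i ^ 2 + gradient f ξ j ^ 2)) • gradient f ξ := by
  ext c
  exact det_of_rows_eq_planeTangent hij hD goldmanMat_row_left (goldmanMat_row_right hij)
    fun _ hki hkj => goldmanMat_row_of_ne hij hki hkj

theorem fderiv_goldmanTan_apply (hij : i ≠ j) (hD : gradient f ξ i ^ 2 + gradient f ξ j ^ 2 ≠ 0)
    (hf : DifferentiableAt ℝ (gradient f) ξ) (v : Euc n) :
    fderiv ℝ (goldmanTan f ξ i j) ξ v =
      (⟪gradient f ξ, fderiv ℝ (gradient f) ξ v⟫ / (gradient f ξ i ^ 2 + gradient f ξ j ^ 2)) •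
          planeTangent (gradient f ξ) i j -
        (⟪planeTangent (gradient f ξ) i j, fderiv ℝ (gradient f) ξ v⟫ /
          (gradient f ξ i ^ 2 + gradient f ξ j ^ 2)) • gradient f ξ := by
  let L : Euc n →L[ℝ] Euc n := (gradient f ξ i ^ 2 + gradient f ξ j ^ 2)⁻¹ •
    ((innerSL ℝ (gradient f ξ)).smulRight (planeTangent (gradient f ξ) i j) -
      (innerSL ℝ (planeTangent (gradient f ξ) i j)).smulRight (gradient f ξ))
  have hL : goldmanTan f ξ i j = L ∘ gradient f := funext fun η => by
    simp [L, goldmanTan_eq hij hD, div_eq_inv_mul, smul_sub, mul_smul]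
  rw [hL, (L.hasFDerivAt.comp ξ hf.hasFDerivAt).fderiv]
  simp [L, div_eq_inv_mul, smul_sub, mul_smul]

end GoldmanTangent

theorem goldmanCurv_eq_hessian_formula_general
    {n : ℕ} (ξ : Euc n) (f : Euc n → ℝ) (δ : ℝ) (hδ : 0 < δ)
    (hf : ContDiffOn ℝ 2 f (Metric.ball ξ δ)) (i : Fin n) (hi : gradient f ξ i ≠ 0)
    (j : Fin n) (hj : j ≠ i) :
    goldmanCurv f ξ i j =
      |hessQ f ξ (EuclideanSpace.single i 1) (EuclideanSpace.single i 1) *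
          gradient f ξ j ^ 2 -
        2 * gradient f ξ i * gradient f ξ j *
          hessQ f ξ (EuclideanSpace.single i 1) (EuclideanSpace.single j 1) +
        hessQ f ξ (EuclideanSpace.single j 1) (EuclideanSpace.single j 1) *
          gradient f ξ i ^ 2| /
      (‖gradient f ξ‖ * (gradient f ξ i ^ 2 + gradient f ξ j ^ 2)) := by
  have hfξ : ContDiffAt ℝ 2 f ξ := hf.contDiffAt (Metric.ball_mem_nhds ξ hδ)
  have hij : i ≠ j := hj.symm
  have hD : 0 < gradient f ξ i ^ 2 + gradient f ξ j ^ 2 := by positivity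
  have hg : 0 < ‖gradient f ξ‖ := norm_pos_iff.2 fun h => hi (by simp [h])
  have hT : goldmanTan f ξ i j ξ =
      (‖gradient f ξ‖ ^ 2 / (gradient f ξ i ^ 2 + gradient f ξ j ^ 2)) •
        planeTangent (gradient f ξ) i j := by
    rw [goldmanTan_eq hij hD.ne', inner_planeTangent_self_left, real_inner_self_eq_norm_sq,
      zero_div, zero_smul, sub_zero]
  rw [goldmanCurv, fderiv_goldmanTan_apply hij hD.ne' hfξ.differentiableAt_gradient, hT,
    sqrt_wedgeNormSq_div_norm_pow_three (inner_planeTangent_self_left _) _ _ (by positivity),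
    map_smul, real_inner_smul_right, real_inner_comm, ← hessQ, hfξ.hessQ_planeTangent,
    norm_planeTangent_sq hij, abs_div, abs_mul, abs_of_pos (by positivity), abs_of_pos hD]
  field_simp

/-- Goldman's curvature of the intersection curve `∂F ∩ P(ξ, u^j(ξ))`, given near `ξ` by
the `n − 1` implicit equations `f = 0, p_{k₁ξ} = 0, …, p_{k_{n−2}ξ} = 0`, equals
`|f_{x_ix_i}f_{x_j}² − 2f_{x_i}f_{x_j}f_{x_ix_j} + f_{x_jx_j}f_{x_i}²| /
(‖∇f(ξ)‖(f_{x_i}² + f_{x_j}²))`. -/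
theorem goldmanCurv_eq_hessian_formula
    {n : ℕ} (hn : 3 ≤ n) (F : Set (Euc n)) (hF : IsCompact F) (hFc : Convex ℝ F)
    (h0 : (0 : Euc n) ∈ interior F) (ξ : Euc n) (hξ : ξ ∈ frontier F)
    (f : Euc n → ℝ) (δ : ℝ) (hδ : 0 < δ) (hf : ContDiffOn ℝ 2 f (Metric.ball ξ δ))
    (hFf : F ⊆ {x | f x ≤ 0}) (hgr : 0 < ⟪ξ, gradient f ξ⟫)
    (hbd : ∀ x ∈ Metric.ball ξ δ, (x ∈ frontier F ↔ f x = 0))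
    (i : Fin n) (hi : gradient f ξ i ≠ 0) (hifirst : ∀ k < i, gradient f ξ k = 0)
    (j : Fin n) (hj : j ≠ i) :
    goldmanCurv f ξ i j =
      |hessQ f ξ (EuclideanSpace.single i 1) (EuclideanSpace.single i 1) *
          gradient f ξ j ^ 2 -
        2 * gradient f ξ i * gradient f ξ j *
          hessQ f ξ (EuclideanSpace.single i 1) (EuclideanSpace.single j 1) +
        hessQ f ξ (EuclideanSpace.single j 1) (EuclideanSpace.single j 1) *
          gradient f ξ i ^ 2| /
      (‖gradient f ξ‖ * (gradient f ξ i ^ 2 + gradient f ξ j ^ 2)) :=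
  goldmanCurv_eq_hessian_formula_general ξ f δ hδ hf i hi j hj

end
end
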